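/- arXiv:0805.2764 — 2 statements merged into one kernel-verified Lean document; each statement's English description precedes it below -/
import Mathlib

section
/- Let φ_{ν_1...ν_s} be a smooth symmetric rank-s tensor field (s > 2) on D-dimensional Minkowski spacetime, with spin-s curvature K = 2^s Y^s(∂^s φ) and Fronsdal tensor F. Then the divergence identity ∂^{μ_s} K_{μ_1ν_1|...|μ_sν_s} = 2^{s-1} Y^{s-1}(∂^{s-1}_{μ_1...μ_{s-1}} F_{ν_1...ν_s}) holds identically. -/
/-!
STATEMENT 11.  Let `φ_{ν₁...ν_s}` be a smooth symmetric rank-`s` tensor field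
(`s > 2`) on `D`-dimensional Minkowski spacetime, with spin-`s` curvature
`K = 2^s Y^s(∂^s φ)` and Fronsdal tensor `F`.  Then the divergence identity
`∂^{μ_s} K_{μ₁ν₁|...|μ_sν_s} = 2^{s-1} Y^{s-1}(∂^{s-1}_{μ₁...μ_{s-1}} F_{ν₁...ν_s})`
holds identically.

The spin is written `s = m + 3` (so `s > 2`); the free indices are
`μ : Fin (m+2) → Fin D` (that is `μ₁,…,μ_{s-1}`) and `ν : Fin (m+3) → Fin D`
(that is `ν₁,…,ν_s`).  Note `2^{s-1} Y^{s-1}` expands to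
`∑_{ε} (−1)^{|ε|} (swap of the pairs (μᵢ,νᵢ) selected by ε)`.
-/
noncomputable section

open scoped BigOperators

/-- A point of `D`-dimensional Minkowski spacetime. -/
abbrev Pt (D : ℕ) : Type := Fin D → ℝ

/-- A rank-`n` covariant tensor field on `D`-dimensional Minkowski spacetime,
given by its components. -/
abbrev TF (D n : ℕ) : Type := Pt D → (Fin n → Fin D) → ℝ

/-- The components of the flat Minkowski metric `η = diag(−1,1,…,1)` (mostly
plus signature); numerically the inverse metric has the same components, so
`mink` is also used to raise and contract indices. -/
def mink (D : ℕ) (a b : Fin D) : ℝ :=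
  if a = b then (if (a : ℕ) = 0 then -1 else 1) else 0

/-- The partial derivative `∂_a f` of a scalar function on spacetime. -/
def pd {D : ℕ} (a : Fin D) (f : Pt D → ℝ) : Pt D → ℝ :=
  fun x => fderiv ℝ f x (Pi.single a 1)

/-- Iterated partial derivative along a list of directions. -/
def pdList {D : ℕ} : List (Fin D) → (Pt D → ℝ) → Pt D → ℝ
  | [], f => f
  | a :: l, f => pd a (pdList l f)

/-- Smoothness of all components of a tensor field. -/
def SmoothTF {D n : ℕ} (T : TF D n) : Prop :=
  ∀ idx : Fin n → Fin D, ContDiff ℝ (⊤ : ℕ∞) (fun x => T x idx)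

/-- Total symmetry of a tensor field in all of its indices. -/
def SymTF {D n : ℕ} (T : TF D n) : Prop :=
  ∀ (x : Pt D) (σ : Equiv.Perm (Fin n)) (idx : Fin n → Fin D),
    T x (idx ∘ σ) = T x idx

/-- Remove the `i`-th entry of an index tuple. -/
def removeAt {n : ℕ} {α : Type} (i : Fin n) (idx : Fin n → α) :
    Fin (n - 1) → α :=
  fun k => idx (if _ : (k : ℕ) < (i : ℕ)
    then ⟨k, by have := i.isLt; omega⟩
    else ⟨(k : ℕ) + 1, by have := k.isLt; omega⟩)

/-- The strictly monotone map `Fin (n-2) → Fin n` skipping positions `i ≠ j`. -/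
def skip2 {n : ℕ} (i j : Fin n) (k : Fin (n - 2)) : Fin n :=
  if _ : (k : ℕ) < min (i : ℕ) (j : ℕ) then
    ⟨k, by have := i.isLt; have := j.isLt; omega⟩
  else if _ : (k : ℕ) + 1 < max (i : ℕ) (j : ℕ) then
    ⟨(k : ℕ) + 1, by have := i.isLt; have := j.isLt; omega⟩
  else ⟨(k : ℕ) + 2, by have := k.isLt; omega⟩

/-- Remove the `i`-th and `j`-th entries (`i ≠ j`) of an index tuple. -/
def removeAt2 {n : ℕ} {α : Type} (i j : Fin n) (idx : Fin n → α) :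
    Fin (n - 2) → α :=
  fun k => idx (skip2 i j k)

/-- Prepend one index to an index tuple. -/
def push1 {D n : ℕ} (a : Fin D) (idx : Fin (n - 1) → Fin D) : Fin n → Fin D :=
  fun i => if _ : (i : ℕ) = 0 then a
    else idx ⟨(i : ℕ) - 1, by have := i.isLt; omega⟩

/-- Prepend two indices to an index tuple. -/
def push2 {D n : ℕ} (a b : Fin D) (idx : Fin (n - 2) → Fin D) :
    Fin n → Fin D :=
  fun i => if _ : (i : ℕ) = 0 then a
    else if _ : (i : ℕ) = 1 then b
    else idx ⟨(i : ℕ) - 2, by have := i.isLt; omega⟩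

/-- The trace `T'` of a tensor field: contraction of two indices with the
(inverse) Minkowski metric.  (Defined to vanish on tensors of rank `< 2`.) -/
def traceTF {D n : ℕ} (T : TF D n) : TF D (n - 2) :=
  fun x idx => if 2 ≤ n then
    ∑ a : Fin D, ∑ b : Fin D, mink D a b * T x (push2 a b idx)
  else 0

/-- The divergence `∂·T` of a tensor field.  (Vanishes on rank `< 1`.) -/
def divTF {D n : ℕ} (T : TF D n) : TF D (n - 1) :=
  fun x idx => if 1 ≤ n then
    ∑ a : Fin D, ∑ b : Fin D, mink D a b * pd a (fun y => T y (push1 b idx)) x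
  else 0

/-- The d'Alembertian `□T = η^{ab} ∂_a ∂_b T`. -/
def boxTF {D n : ℕ} (T : TF D n) : TF D n :=
  fun x idx =>
    ∑ a : Fin D, ∑ b : Fin D, mink D a b * pd a (pd b (fun y => T y idx)) x

/-- The Fronsdal tensor of a symmetric rank-`s` tensor field,
`F = □φ − s ∂²_{ρ(μ₁} φ^ρ_{μ₂...μ_s)} + (s(s−1)/2) ∂²_{(μ₁μ₂} φ'_{μ₃...μ_s)}`;
with strength-one conventions the second term is `∑_i ∂_{μ_i} (∂·φ)` and the
third is `∑_{i<j} ∂_{μ_i}∂_{μ_j} φ'`. -/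
def Fronsdal {D s : ℕ} (φ : TF D s) : TF D s :=
  fun x idx =>
    boxTF φ x idx
    - ∑ i : Fin s, pd (idx i) (fun y => divTF φ y (removeAt i idx)) x
    + (1/2) * ∑ i : Fin s, ∑ j : Fin s,
        (if i ≠ j then
          pd (idx i) (pd (idx j) (fun y => traceTF φ y (removeAt2 i j idx))) x
        else 0)

/-- The sign `(−1)^{|ε|}` of a pair-swapping pattern. -/
def swapSign {s : ℕ} (ε : Fin s → Bool) : ℝ :=
  ∏ i : Fin s, (if ε i then (-1 : ℝ) else 1)

/-- The spin-`s` curvature `K_{μ₁ν₁|...|μ_sν_s} = 2^s Y^s(∂^s_{μ₁...μ_s}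
φ_{ν₁...ν_s})`, where `Y^s = 2^{-s} ∏ᵢ (e − (μᵢνᵢ))` antisymmetrizes over each
pair `(μᵢ, νᵢ)`.  It is written as a function of the `s` index pairs:
`curvK φ x p = ∑_{ε : Fin s → Bool} (−1)^{|ε|} ∂_{a₁}…∂_{a_s} φ_{b₁…b_s}` with
`(aᵢ, bᵢ) = p i` swapped when `ε i` holds. -/
def curvK {D s : ℕ} (φ : TF D s) : Pt D → (Fin s → Fin D × Fin D) → ℝ :=
  fun x p => ∑ ε : Fin s → Bool, swapSign ε *
    pdList (List.ofFn (fun i => if ε i then (p i).2 else (p i).1))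
      (fun y => φ y (fun i => if ε i then (p i).1 else (p i).2)) x


section AuxiliaryLemmas

variable {D : ℕ}

lemma contDiff_pd {f : Pt D → ℝ} (hf : ContDiff ℝ (⊤ : ℕ∞) f) (a : Fin D) :
    ContDiff ℝ (⊤ : ℕ∞) (pd a f) := by
  have h1 : ContDiff ℝ (⊤ : ℕ∞) (fderiv ℝ f) := hf.fderiv_right (by simp)
  exact (ContinuousLinearMap.apply ℝ ℝ (Pi.single a 1 : Pt D)).contDiff.comp h1

lemma contDiff_pdList {f : Pt D → ℝ} (hf : ContDiff ℝ (⊤ : ℕ∞) f) (l : List (Fin D)) :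
    ContDiff ℝ (⊤ : ℕ∞) (pdList l f) := by
  induction l with
  | nil => exact hf
  | cons a l ih => exact contDiff_pd ih a

lemma pd_comm {f : Pt D → ℝ} (hf : ContDiff ℝ (⊤ : ℕ∞) f) (a b : Fin D) :
    pd a (pd b f) = pd b (pd a f) := by
  funext x
  have hsymm : IsSymmSndFDerivAt ℝ f x := hf.contDiffAt.isSymmSndFDerivAt (by rw [minSmoothness_of_isRCLikeNormedField]; exact WithTop.coe_le_coe.mpr le_top)
  have h1 : ContDiff ℝ (⊤ : ℕ∞) (fderiv ℝ f) := hf.fderiv_right (by simp)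
  have key : ∀ c d : Fin D, pd c (pd d f) x
      = fderiv ℝ (fderiv ℝ f) x (Pi.single c 1) (Pi.single d 1) := by
    intro c d
    have : pd d f = (ContinuousLinearMap.apply ℝ ℝ (Pi.single d 1 : Pt D)) ∘ (fderiv ℝ f) := rfl
    rw [pd, this]
    have hdiff : DifferentiableAt ℝ (fderiv ℝ f) x := (h1.differentiable (by simp)).differentiableAt
    rw [fderiv_comp x (ContinuousLinearMap.apply ℝ ℝ (Pi.single d 1 : Pt D)).differentiableAt hdiff]
    simp [ContinuousLinearMap.fderiv]
  rw [key a b, key b a, hsymm]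

lemma pd_sumF {ι : Type*} (s : Finset ι) (F : ι → Pt D → ℝ)
    (hF : ∀ i ∈ s, ContDiff ℝ (⊤ : ℕ∞) (F i)) (a : Fin D) :
    pd a (fun y => ∑ i ∈ s, F i y) = fun x => ∑ i ∈ s, pd a (F i) x := by
  funext x
  rw [pd]
  rw [fderiv_fun_sum (fun i hi => ((hF i hi).differentiable (by simp)).differentiableAt)]
  simp [pd]

lemma pd_const_mul (c : ℝ) {f : Pt D → ℝ} (hf : ContDiff ℝ (⊤ : ℕ∞) f) (a : Fin D) :
    pd a (fun y => c * f y) = fun x => c * pd a f x := by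
  funext x
  rw [pd, fderiv_const_mul ((hf.differentiable (by simp)).differentiableAt)]
  simp [pd]

lemma pd_sub {f g : Pt D → ℝ} (hf : ContDiff ℝ (⊤ : ℕ∞) f) (hg : ContDiff ℝ (⊤ : ℕ∞) g) (a : Fin D) :
    pd a (fun y => f y - g y) = fun x => pd a f x - pd a g x := by
  funext x
  rw [pd, fderiv_fun_sub ((hf.differentiable (by simp)).differentiableAt)
    ((hg.differentiable (by simp)).differentiableAt)]
  simp [pd]

lemma pd_add {f g : Pt D → ℝ} (hf : ContDiff ℝ (⊤ : ℕ∞) f) (hg : ContDiff ℝ (⊤ : ℕ∞) g) (a : Fin D) :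
    pd a (fun y => f y + g y) = fun x => pd a f x + pd a g x := by
  funext x
  rw [pd, fderiv_fun_add ((hf.differentiable (by simp)).differentiableAt)
    ((hg.differentiable (by simp)).differentiableAt)]
  simp [pd]

lemma pd_zero (a : Fin D) : pd a (fun _ : Pt D => (0:ℝ)) = fun _ => 0 := by
  funext x; simp [pd]

lemma pdList_zero (l : List (Fin D)) : pdList l (fun _ : Pt D => (0:ℝ)) = fun _ => 0 := by
  induction l with
  | nil => rfl
  | cons a l ih => show pd a (pdList l _) = _; rw [ih, pd_zero]

lemma pdList_sumF {ι : Type*} (s : Finset ι) (F : ι → Pt D → ℝ)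
    (hF : ∀ i ∈ s, ContDiff ℝ (⊤ : ℕ∞) (F i)) (l : List (Fin D)) :
    pdList l (fun y => ∑ i ∈ s, F i y) = fun x => ∑ i ∈ s, pdList l (F i) x := by
  induction l with
  | nil => rfl
  | cons a l ih =>
    show pd a (pdList l _) = _
    rw [ih]
    exact pd_sumF s _ (fun i hi => contDiff_pdList (hF i hi) l) a

lemma pdList_const_mul (c : ℝ) {f : Pt D → ℝ} (hf : ContDiff ℝ (⊤ : ℕ∞) f) (l : List (Fin D)) :
    pdList l (fun y => c * f y) = fun x => c * pdList l f x := by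
  induction l with
  | nil => rfl
  | cons a l ih =>
    show pd a (pdList l _) = _
    rw [ih]
    exact pd_const_mul c (contDiff_pdList hf l) a

lemma pdList_sub {f g : Pt D → ℝ} (hf : ContDiff ℝ (⊤ : ℕ∞) f) (hg : ContDiff ℝ (⊤ : ℕ∞) g)
    (l : List (Fin D)) :
    pdList l (fun y => f y - g y) = fun x => pdList l f x - pdList l g x := by
  induction l with
  | nil => rfl
  | cons a l ih =>
    show pd a (pdList l _) = _
    rw [ih]
    exact pd_sub (contDiff_pdList hf l) (contDiff_pdList hg l) a

lemma pdList_add {f g : Pt D → ℝ} (hf : ContDiff ℝ (⊤ : ℕ∞) f) (hg : ContDiff ℝ (⊤ : ℕ∞) g)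
    (l : List (Fin D)) :
    pdList l (fun y => f y + g y) = fun x => pdList l f x + pdList l g x := by
  induction l with
  | nil => rfl
  | cons a l ih =>
    show pd a (pdList l _) = _
    rw [ih]
    exact pd_add (contDiff_pdList hf l) (contDiff_pdList hg l) a

lemma pd_pdList {f : Pt D → ℝ} (hf : ContDiff ℝ (⊤ : ℕ∞) f) (a : Fin D) (l : List (Fin D)) :
    pd a (pdList l f) = pdList l (pd a f) := by
  induction l with
  | nil => rfl
  | cons b l ih =>
    show pd a (pd b (pdList l f)) = pd b (pdList l (pd a f))
    rw [pd_comm (contDiff_pdList hf l) a b, ih]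

lemma pdList_append (l₁ l₂ : List (Fin D)) (f : Pt D → ℝ) :
    pdList (l₁ ++ l₂) f = pdList l₁ (pdList l₂ f) := by
  induction l₁ with
  | nil => rfl
  | cons a l ih => show pd a (pdList (l ++ l₂) f) = _; rw [ih]; rfl

lemma pdList_perm {l₁ l₂ : List (Fin D)} (h : l₁.Perm l₂) {f : Pt D → ℝ}
    (hf : ContDiff ℝ (⊤ : ℕ∞) f) : pdList l₁ f = pdList l₂ f := by
  induction h with
  | nil => rfl
  | cons a _ ih => show pd a _ = pd a _; rw [ih]
  | swap a b l =>
    show pd b (pd a (pdList l f)) = pd a (pd b (pdList l f))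
    exact pd_comm (contDiff_pdList hf l) b a
  | trans _ _ ih₁ ih₂ => rw [ih₁, ih₂]

lemma perm_ofFn_update {α : Type*} : ∀ {k : ℕ} (f : Fin k → α) (i : Fin k) (c : α),
    (List.ofFn f ++ [c]).Perm (List.ofFn (Function.update f i c) ++ [f i])
  | 0, _, i, _ => i.elim0
  | k+1, f, i, c => by
    rcases Fin.eq_zero_or_eq_succ i with h | ⟨j, rfl⟩
    · subst h
      rw [List.ofFn_succ, List.ofFn_succ]
      have h1 : Function.update f 0 c 0 = c := Function.update_self _ _ _
      have h2 : (fun j : Fin k => Function.update f 0 c j.succ) = fun j => f j.succ := by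
        funext j; exact Function.update_of_ne (Fin.succ_ne_zero j) _ _
      rw [h1, h2]
      refine ((List.Perm.cons (f 0) (List.perm_append_singleton c _)).trans
        (List.Perm.swap c (f 0) _)).trans
        (List.Perm.cons c (List.perm_append_singleton (f 0) _).symm)
    · rw [List.ofFn_succ, List.ofFn_succ]
      have h1 : Function.update f j.succ c 0 = f 0 :=
        Function.update_of_ne (Fin.succ_ne_zero j).symm _ _
      have h2 : (fun l : Fin k => Function.update f j.succ c l.succ)
          = Function.update (fun l : Fin k => f l.succ) j c := by
        funext l
        rcases eq_or_ne l j with rfl | hne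
        · rw [Function.update_self, Function.update_self]
        · rw [Function.update_of_ne hne, Function.update_of_ne (fun hc => hne (Fin.succ_injective _ hc))]
      rw [h1, h2]
      exact List.Perm.cons _ (perm_ofFn_update (fun l : Fin k => f l.succ) j c)

lemma pdList_ofFn_update {k : ℕ} (f : Fin k → Fin D) (i : Fin k) (c : Fin D)
    {g : Pt D → ℝ} (hg : ContDiff ℝ (⊤ : ℕ∞) g) :
    pdList (List.ofFn f) (pd c g) = pdList (List.ofFn (Function.update f i c)) (pd (f i) g) := by
  have h1 : pdList (List.ofFn f) (pd c g) = pdList (List.ofFn f ++ [c]) g := by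
    rw [pdList_append]; rfl
  have h2 : pdList (List.ofFn (Function.update f i c)) (pd (f i) g)
      = pdList (List.ofFn (Function.update f i c) ++ [f i]) g := by
    rw [pdList_append]; rfl
  rw [h1, h2, pdList_perm (perm_ofFn_update f i c) hg]

def swapSign' {s : ℕ} (ε : Fin s → Bool) : ℝ :=
  ∏ i : Fin s, (if ε i then (-1 : ℝ) else 1)

lemma swapSign_update {s : ℕ} (ε : Fin s → Bool) (i : Fin s) :
    swapSign' (Function.update ε i (!ε i)) = - swapSign' ε := by
  unfold swapSign'
  have h : ∀ (v : Bool), (fun j => if (Function.update ε i v) j then (-1:ℝ) else 1)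
      = Function.update (fun j => if ε j then (-1:ℝ) else 1) i (if v then (-1:ℝ) else 1) := by
    intro v; funext j
    rcases eq_or_ne j i with rfl | hne
    · rw [Function.update_self, Function.update_self]
    · rw [Function.update_of_ne hne, Function.update_of_ne hne]
  rw [h]
  rw [Finset.prod_update_of_mem (Finset.mem_univ i)]
  rw [← Finset.mul_prod_erase Finset.univ _ (Finset.mem_univ i)]
  rcases Bool.eq_false_or_eq_true (ε i) with hb | hb <;> rw [hb] <;>
    simp [Finset.sdiff_singleton_eq_erase]

lemma sum_flip_zero {k : ℕ} (i₀ : Fin k) (G : (Fin k → Bool) → ℝ)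
    (h : ∀ ε, G (Function.update ε i₀ (!ε i₀)) = - G ε) :
    ∑ ε : Fin k → Bool, G ε = 0 := by
  have hinv : ∀ ε : Fin k → Bool,
      Function.update (Function.update ε i₀ (!ε i₀)) i₀ (!(Function.update ε i₀ (!ε i₀) i₀)) = ε := by
    intro ε
    rw [Function.update_self, Bool.not_not, Function.update_idem, Function.update_eq_self]
  refine Finset.sum_involution (fun ε _ => Function.update ε i₀ (!ε i₀)) ?_ ?_ ?_ ?_
  · intro ε _; rw [h ε]; ring
  · intro ε _ hne hc
    have := congrFun hc i₀
    simp at this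
  · intro ε _; exact Finset.mem_univ _
  · intro ε _; exact hinv ε

-- smoothness lemmas

lemma smooth_divTF {n : ℕ} {T : TF D n} (h : SmoothTF T) : SmoothTF (divTF T) := by
  intro idx
  unfold divTF
  by_cases hn : 1 ≤ n
  · simp only [hn, if_true]
    exact ContDiff.sum fun a _ => ContDiff.sum fun b _ =>
      contDiff_const.mul (contDiff_pd (h (push1 b idx)) a)
  · simp only [hn, if_false]; exact contDiff_const

lemma smooth_traceTF {n : ℕ} {T : TF D n} (h : SmoothTF T) : SmoothTF (traceTF T) := by
  intro idx
  unfold traceTF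
  by_cases hn : 2 ≤ n
  · simp only [hn, if_true]
    exact ContDiff.sum fun a _ => ContDiff.sum fun b _ =>
      contDiff_const.mul (h (push2 a b idx))
  · simp only [hn, if_false]; exact contDiff_const

lemma smooth_boxTF {n : ℕ} {T : TF D n} (h : SmoothTF T) : SmoothTF (boxTF T) := by
  intro idx
  unfold boxTF
  exact ContDiff.sum fun a _ => ContDiff.sum fun b _ =>
    contDiff_const.mul (contDiff_pd (contDiff_pd (h idx) b) a)

-- congruence for removeAt / removeAt2

lemma removeAt_congr {n : ℕ} {α : Type} (i : Fin n) {idx₁ idx₂ : Fin n → α}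
    (h : ∀ j, j ≠ i → idx₁ j = idx₂ j) : removeAt i idx₁ = removeAt i idx₂ := by
  funext k
  unfold removeAt
  split
  · rename_i hlt
    refine h _ ?_
    intro hc
    have := congrArg Fin.val hc
    simp at this
    omega
  · refine h _ ?_
    intro hc
    have := congrArg Fin.val hc
    simp at this
    omega

lemma skip2_ne {n : ℕ} (i j : Fin n) (hij : i ≠ j) (k : Fin (n-2)) :
    skip2 i j k ≠ i ∧ skip2 i j k ≠ j := by
  have hv : (i : ℕ) ≠ (j : ℕ) := fun hc => hij (Fin.ext hc)
  unfold skip2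
  constructor <;> (split; · intro hc; have := congrArg Fin.val hc; simp at this; omega
                   · split <;> · intro hc; have := congrArg Fin.val hc; simp at this; omega)

lemma removeAt2_congr {n : ℕ} {α : Type} (i j : Fin n) (hij : i ≠ j) {idx₁ idx₂ : Fin n → α}
    (h : ∀ l, l ≠ i → l ≠ j → idx₁ l = idx₂ l) : removeAt2 i j idx₁ = removeAt2 i j idx₂ := by
  funext k
  exact h _ (skip2_ne i j hij k).1 (skip2_ne i j hij k).2

lemma swapSign_update' {s : ℕ} (ε : Fin s → Bool) (i : Fin s) :
    swapSign (Function.update ε i (!ε i)) = - swapSign ε :=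
  swapSign_update ε i

variable {D m : ℕ}

/-- the derivative-direction list of the RHS -/
def LLd (μ : Fin (m+2) → Fin D) (ν : Fin (m+3) → Fin D) (ε : Fin (m+2) → Bool) :
    List (Fin D) :=
  List.ofFn (fun i : Fin (m + 2) =>
    if ε i then ν ⟨(i : ℕ), Nat.lt_succ_of_lt i.isLt⟩ else μ i)

/-- the index function fed to the Fronsdal tensor -/
def JJd (μ : Fin (m+2) → Fin D) (ν : Fin (m+3) → Fin D) (ε : Fin (m+2) → Bool) :
    Fin (m+3) → Fin D :=
  fun j => if h : (j : ℕ) < m + 2 then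
      (if ε ⟨(j : ℕ), h⟩ then μ ⟨(j : ℕ), h⟩ else ν j) else ν j

/-- index function with the last index replaced by `b` -/
def JBd (μ : Fin (m+2) → Fin D) (ν : Fin (m+3) → Fin D) (b : Fin D) (ε : Fin (m+2) → Bool) :
    Fin (m+3) → Fin D :=
  fun j => if h : (j : ℕ) < m + 2 then
      (if ε ⟨(j : ℕ), h⟩ then μ ⟨(j : ℕ), h⟩ else ν j) else b

/-- the pair assignment of the LHS -/
def Ppd (μ : Fin (m+2) → Fin D) (ν : Fin (m+3) → Fin D) (b : Fin D) :
    Fin (m+3) → Fin D × Fin D :=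
  fun i => if h : (i : ℕ) < m + 2 then (μ ⟨(i : ℕ), h⟩, ν i) else (b, ν i)

variable (μ : Fin (m+2) → Fin D) (ν : Fin (m+3) → Fin D)

lemma swapSign_snoc (ε : Fin (m+2) → Bool) (c : Bool) :
    swapSign (Fin.snoc ε c : Fin (m+3) → Bool) = swapSign ε * (if c then -1 else 1) := by
  unfold swapSign
  rw [Fin.prod_univ_castSucc]
  simp [Fin.snoc_castSucc, Fin.snoc_last]

lemma JJ_last (ε : Fin (m+2) → Bool) :
    JJd μ ν ε (Fin.last (m+2)) = ν (Fin.last (m+2)) := by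
  unfold JJd
  rw [dif_neg]
  simp [Fin.last]

lemma JJ_castSucc (ε : Fin (m+2) → Bool) (i : Fin (m+2)) :
    JJd μ ν ε (Fin.castSucc i) = if ε i then μ i else ν (Fin.castSucc i) := by
  unfold JJd
  rw [dif_pos (by simpa using i.isLt)]
  simp

lemma JJ_flip_ne (ε : Fin (m+2) → Bool) (i₀ : Fin (m+2)) (v : Bool) (j : Fin (m+3))
    (hj : j ≠ Fin.castSucc i₀) :
    JJd μ ν (Function.update ε i₀ v) j = JJd μ ν ε j := by
  unfold JJd
  by_cases h : (j : ℕ) < m + 2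
  · rw [dif_pos h, dif_pos h]
    have hne : (⟨(j : ℕ), h⟩ : Fin (m+2)) ≠ i₀ := by
      intro hc
      apply hj
      apply Fin.ext
      have := congrArg Fin.val hc
      simpa using this
    rw [Function.update_of_ne hne]
  · rw [dif_neg h, dif_neg h]

lemma JJ_flip_castSucc (ε : Fin (m+2) → Bool) (i₀ : Fin (m+2)) :
    JJd μ ν (Function.update ε i₀ (!ε i₀)) (Fin.castSucc i₀)
      = if ε i₀ then ν (Fin.castSucc i₀) else μ i₀ := by
  rw [JJ_castSucc, Function.update_self]
  cases h : ε i₀ <;> simp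

lemma LL_flip (ε : Fin (m+2) → Bool) (i₀ : Fin (m+2)) :
    (fun i : Fin (m+2) =>
        if (Function.update ε i₀ (!ε i₀)) i then ν ⟨(i : ℕ), Nat.lt_succ_of_lt i.isLt⟩ else μ i)
      = Function.update
          (fun i : Fin (m+2) => if ε i then ν ⟨(i : ℕ), Nat.lt_succ_of_lt i.isLt⟩ else μ i)
          i₀ (JJd μ ν ε (Fin.castSucc i₀)) := by
  funext i
  rcases eq_or_ne i i₀ with rfl | hne
  · rw [Function.update_self, Function.update_self, JJ_castSucc]
    cases h : ε i <;> simp [h, Fin.castSucc, Fin.castAdd, Fin.castLE]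
  · rw [Function.update_of_ne hne, Function.update_of_ne hne]


/-- The main cancellation lemma: a sum over swap patterns of a term whose
`i₀`-th derivative pair appears symmetrically vanishes. -/
lemma cancel_main (i₀ : Fin (m+2)) (g : (Fin (m+2) → Bool) → Pt D → ℝ)
    (hg : ∀ ε, ContDiff ℝ (⊤ : ℕ∞) (g ε))
    (hginv : ∀ ε, g (Function.update ε i₀ (!ε i₀)) = g ε) (x : Pt D) :
    ∑ ε : Fin (m+2) → Bool, swapSign ε *
      pdList (LLd μ ν ε) (pd (JJd μ ν ε (Fin.castSucc i₀)) (g ε)) x = 0 := by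
  apply sum_flip_zero i₀
  intro ε
  rw [hginv ε, swapSign_update']
  unfold LLd
  rw [LL_flip, JJ_flip_castSucc]
  have hc : (if ε i₀ then ν (Fin.castSucc i₀) else μ i₀)
      = (fun i : Fin (m+2) =>
          if ε i then ν ⟨(i : ℕ), Nat.lt_succ_of_lt i.isLt⟩ else μ i) i₀ := by
    cases h : ε i₀ <;> simp [h, Fin.castSucc, Fin.castAdd, Fin.castLE]
  rw [hc, ← pdList_ofFn_update _ i₀ (JJd μ ν ε (Fin.castSucc i₀)) (hg ε)]
  ring

/-- computation of the direction list for a snoc-pattern -/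
lemma dirs_snoc (b : Fin D) (ε : Fin (m+2) → Bool) (c : Bool) :
    List.ofFn (fun i : Fin (m+3) =>
        if (Fin.snoc ε c : Fin (m+3) → Bool) i then (Ppd μ ν b i).2 else (Ppd μ ν b i).1)
      = LLd μ ν ε ++ [if c then ν (Fin.last (m+2)) else b] := by
  rw [List.ofFn_succ']
  rw [List.concat_eq_append]
  congr 1
  · unfold LLd
    congr 1
    funext i
    rw [Fin.snoc_castSucc]
    unfold Ppd
    rw [dif_pos (by simpa using i.isLt)]
    rfl
  · rw [Fin.snoc_last]
    unfold Ppd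
    rw [dif_neg (by simp [Fin.last])]

/-- computation of the field index function for a snoc-pattern, `c = false` -/
lemma fld_snoc_false (b : Fin D) (ε : Fin (m+2) → Bool) :
    (fun i : Fin (m+3) =>
        if (Fin.snoc ε false : Fin (m+3) → Bool) i then (Ppd μ ν b i).1 else (Ppd μ ν b i).2)
      = JJd μ ν ε := by
  funext j
  by_cases hj : (j : ℕ) < m + 2
  · have hj' : j = Fin.castSucc (⟨(j : ℕ), hj⟩ : Fin (m+2)) := Fin.ext rfl
    rw [hj', Fin.snoc_castSucc, JJ_castSucc]
    unfold Ppd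
    rw [dif_pos (by simpa using hj)]
    simp
  · have hj' : j = Fin.last (m+2) := Fin.ext (by have := j.isLt; simp [Fin.last]; omega)
    rw [hj', Fin.snoc_last, JJ_last]
    unfold Ppd
    rw [dif_neg (by simp [Fin.last])]
    rfl

/-- computation of the field index function for a snoc-pattern, `c = true` -/
lemma fld_snoc_true (b : Fin D) (ε : Fin (m+2) → Bool) :
    (fun i : Fin (m+3) =>
        if (Fin.snoc ε true : Fin (m+3) → Bool) i then (Ppd μ ν b i).1 else (Ppd μ ν b i).2)
      = JBd μ ν b ε := by
  funext j
  by_cases hj : (j : ℕ) < m + 2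
  · have hj' : j = Fin.castSucc (⟨(j : ℕ), hj⟩ : Fin (m+2)) := Fin.ext rfl
    rw [hj', Fin.snoc_castSucc]
    unfold Ppd JBd
    rw [dif_pos (by simpa using hj), dif_pos (by simpa using hj)]
    simp
  · have hj' : j = Fin.last (m+2) := Fin.ext (by have := j.isLt; simp [Fin.last]; omega)
    rw [hj', Fin.snoc_last]
    unfold Ppd JBd
    rw [dif_neg (by simp [Fin.last]), dif_neg (by simp [Fin.last])]
    rfl

/-- splitting a sum over `Fin (m+3) → Bool` along the last component -/
lemma sum_snoc_split (g : (Fin (m+3) → Bool) → ℝ) :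
    ∑ ε : Fin (m+3) → Bool, g ε
      = ∑ ε : Fin (m+2) → Bool, (g (Fin.snoc ε false) + g (Fin.snoc ε true)) := by
  rw [← Equiv.sum_comp (Fin.snocEquiv (fun _ : Fin (m+3) => Bool)) g]
  rw [Fintype.sum_prod_type]
  rw [Fintype.sum_bool]
  rw [← Finset.sum_add_distrib]
  apply Finset.sum_congr rfl
  intro ε _
  rw [add_comm]
  rfl

/-- removing the last index -/
lemma removeAt_last_eq (idx : Fin (m+3) → Fin D) :
    removeAt (Fin.last (m+2)) idx = fun k : Fin (m+2) => idx (Fin.castSucc k) := by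
  funext k
  unfold removeAt
  rw [dif_pos (by simp [Fin.last])]
  exact congrArg idx (Fin.ext rfl)

/-- the symmetry step: the last index of `φ` can be moved to the front -/
lemma sym_push1 {φ : TF D (m+3)} (hsym : SymTF φ) (b : Fin D) (ε : Fin (m+2) → Bool)
    (z : Pt D) :
    φ z (push1 b (removeAt (Fin.last (m+2)) (JJd μ ν ε))) = φ z (JBd μ ν b ε) := by
  have h := hsym z (finRotate (m+3)) (push1 b (removeAt (Fin.last (m+2)) (JJd μ ν ε)))
  rw [← h]
  congr 1
  funext i
  show push1 b (removeAt (Fin.last (m+2)) (JJd μ ν ε)) (finRotate (m+3) i) = JBd μ ν b ε i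
  rw [finRotate_succ_apply, removeAt_last_eq]
  by_cases hi : (i : ℕ) < m + 2
  · have hval : ((i + 1 : Fin (m+3)) : ℕ) = (i : ℕ) + 1 := by
      rw [Fin.val_add_one_of_lt]
      exact Fin.lt_iff_val_lt_val.mpr (by simp [Fin.last]; omega)
    have h0 : ¬ ((i + 1 : Fin (m+3)) : ℕ) = 0 := by omega
    unfold push1
    rw [dif_neg h0]
    have hcs : Fin.castSucc (⟨((i + 1 : Fin (m+3)) : ℕ) - 1, by omega⟩ : Fin (m+2)) = i :=
      Fin.ext (by simp [hval])
    beta_reduce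
    rw [hcs]
    unfold JJd JBd
    rw [dif_pos hi, dif_pos hi]
  · have hi' : i = Fin.last (m+2) := Fin.ext (by have := i.isLt; simp [Fin.last]; omega)
    subst hi'
    rw [Fin.last_add_one]
    unfold push1
    rw [dif_pos (by simp)]
    unfold JBd
    rw [dif_neg (by simp [Fin.last])]

variable (φ : TF D (m+3))

lemma pd_curvK (hs : SmoothTF φ) (P : Fin (m+3) → Fin D × Fin D) (a : Fin D) (x : Pt D) :
    pd a (fun y => curvK φ y P) x
      = ∑ ε : Fin (m+3) → Bool, swapSign ε *
          pd a (pdList (List.ofFn fun i => if ε i then (P i).2 else (P i).1)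
            (fun z => φ z fun i => if ε i then (P i).1 else (P i).2)) x := by
  have h1 := pd_sumF (D := D) Finset.univ
    (fun ε : Fin (m+3) → Bool => fun y => swapSign ε *
      pdList (List.ofFn fun i => if ε i then (P i).2 else (P i).1)
        (fun z => φ z fun i => if ε i then (P i).1 else (P i).2) y)
    (fun ε _ => contDiff_const.mul (contDiff_pdList (hs _) _)) a
  have h2 : pd a (fun y => curvK φ y P) x
      = ∑ ε : Fin (m+3) → Bool, pd a (fun y => swapSign ε *
          pdList (List.ofFn fun i => if ε i then (P i).2 else (P i).1)
            (fun z => φ z fun i => if ε i then (P i).1 else (P i).2) y) x :=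
    congrFun h1 x
  rw [h2]
  apply Finset.sum_congr rfl
  intro ε _
  exact congrFun (pd_const_mul (swapSign ε) (contDiff_pdList (hs _) _) a) x

lemma box_assemble (hs : SmoothTF φ) (J : Fin (m+3) → Fin D) (l : List (Fin D)) (x : Pt D) :
    ∑ a : Fin D, ∑ b : Fin D, mink D a b * pdList l (pd a (pd b (fun y => φ y J))) x
      = pdList l (fun y => boxTF φ y J) x := by
  have e0 : (fun y => boxTF φ y J)
      = fun y => ∑ p : Fin D × Fin D,
          (mink D p.1 p.2 * pd p.1 (pd p.2 (fun z => φ z J)) y) := by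
    funext y
    rw [Fintype.sum_prod_type]
    rfl
  have h1 := pdList_sumF (D := D) Finset.univ
    (fun p : Fin D × Fin D => fun y => mink D p.1 p.2 * pd p.1 (pd p.2 (fun z => φ z J)) y)
    (fun p _ => contDiff_const.mul (contDiff_pd (contDiff_pd (hs J) p.2) p.1)) l
  have h2 : pdList l (fun y => boxTF φ y J) x
      = ∑ p : Fin D × Fin D, pdList l
          (fun y => mink D p.1 p.2 * pd p.1 (pd p.2 (fun z => φ z J)) y) x := by
    rw [e0]; exact congrFun h1 x
  rw [h2, Fintype.sum_prod_type]
  apply Finset.sum_congr rfl; intro a _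
  apply Finset.sum_congr rfl; intro b _
  exact (congrFun (pdList_const_mul (mink D a b)
    (contDiff_pd (contDiff_pd (hs J) b) a) l) x).symm

lemma div_assemble (hsym : SymTF φ) (hs : SmoothTF φ) (ε : Fin (m+2) → Bool)
    (l : List (Fin D)) (c : Fin D) (x : Pt D) :
    ∑ a : Fin D, ∑ b : Fin D, mink D a b *
        pdList l (pd c (pd a (fun y => φ y (JBd μ ν b ε)))) x
      = pdList l (pd c (fun y => divTF φ y (removeAt (Fin.last (m+2)) (JJd μ ν ε)))) x := by
  -- step 0 : rewrite the divergence as a sum over pairs, using the symmetry of φ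
  have e0 : (fun y => divTF φ y (removeAt (Fin.last (m+2)) (JJd μ ν ε)))
      = fun y => ∑ p : Fin D × Fin D,
          (mink D p.1 p.2 * pd p.1 (fun z => φ z (JBd μ ν p.2 ε)) y) := by
    funext y
    rw [Fintype.sum_prod_type]
    show divTF φ y (removeAt (Fin.last (m+2)) (JJd μ ν ε)) = _
    unfold divTF
    rw [if_pos (by omega : 1 ≤ m + 3)]
    apply Finset.sum_congr rfl; intro a _
    apply Finset.sum_congr rfl; intro b _
    congr 1
    congr 1
    funext z
    exact sym_push1 μ ν hsym b ε z
  -- step 1 : push `pd c` through the sum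
  have e1 : pd c (fun y => divTF φ y (removeAt (Fin.last (m+2)) (JJd μ ν ε)))
      = fun y => ∑ p : Fin D × Fin D,
          (mink D p.1 p.2 * pd c (pd p.1 (fun z => φ z (JBd μ ν p.2 ε))) y) := by
    rw [e0]
    rw [pd_sumF (D := D) Finset.univ
      (fun p : Fin D × Fin D => fun y =>
        mink D p.1 p.2 * pd p.1 (fun z => φ z (JBd μ ν p.2 ε)) y)
      (fun p _ => contDiff_const.mul (contDiff_pd (hs _) p.1)) c]
    funext y
    apply Finset.sum_congr rfl; intro p _
    exact congrFun (pd_const_mul (mink D p.1 p.2) (contDiff_pd (hs _) p.1) c) y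
  rw [e1]
  -- step 2 : push `pdList l` through the sum
  have e2 := pdList_sumF (D := D) Finset.univ
    (fun p : Fin D × Fin D => fun y =>
      mink D p.1 p.2 * pd c (pd p.1 (fun z => φ z (JBd μ ν p.2 ε))) y)
    (fun p _ => contDiff_const.mul (contDiff_pd (contDiff_pd (hs _) p.1) c)) l
  rw [congrFun e2 x, Fintype.sum_prod_type]
  apply Finset.sum_congr rfl; intro a _
  apply Finset.sum_congr rfl; intro b _
  exact (congrFun (pdList_const_mul (mink D a b)
    (contDiff_pd (contDiff_pd (hs (JBd μ ν b ε)) a) c) l) x).symm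

lemma pdList_Fronsdal (hs : SmoothTF φ) (l : List (Fin D)) (J : Fin (m+3) → Fin D) (x : Pt D) :
    pdList l (fun y => Fronsdal φ y J) x
      = pdList l (fun y => boxTF φ y J) x
        - ∑ i : Fin (m+3), pdList l (pd (J i) (fun y => divTF φ y (removeAt i J))) x
        + (1/2) * ∑ i : Fin (m+3), ∑ j : Fin (m+3),
            (if i ≠ j then pdList l (pd (J i) (pd (J j)
                (fun y => traceTF φ y (removeAt2 i j J)))) x else 0) := by
  have sbox : ContDiff ℝ (⊤ : ℕ∞) (fun y => boxTF φ y J) := smooth_boxTF hs J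
  have sdvi : ∀ i : Fin (m+3),
      ContDiff ℝ (⊤ : ℕ∞) (pd (J i) (fun y => divTF φ y (removeAt i J))) :=
    fun i => contDiff_pd (smooth_divTF hs _) _
  have sdv : ContDiff ℝ (⊤ : ℕ∞) (fun y => ∑ i : Fin (m+3),
      pd (J i) (fun z => divTF φ z (removeAt i J)) y) :=
    ContDiff.sum fun i _ => sdvi i
  have strp : ∀ p : Fin (m+3) × Fin (m+3), ContDiff ℝ (⊤ : ℕ∞) (fun y =>
      if p.1 ≠ p.2 then pd (J p.1) (pd (J p.2)
        (fun z => traceTF φ z (removeAt2 p.1 p.2 J))) y else 0) := by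
    intro p
    by_cases hp : p.1 ≠ p.2
    · have hfun : (fun y => if p.1 ≠ p.2 then pd (J p.1) (pd (J p.2)
          (fun z => traceTF φ z (removeAt2 p.1 p.2 J))) y else 0)
          = pd (J p.1) (pd (J p.2) (fun z => traceTF φ z (removeAt2 p.1 p.2 J))) := by
        funext y; rw [if_pos hp]
      rw [hfun]
      exact contDiff_pd (contDiff_pd (smooth_traceTF hs _) _) _
    · have hfun : (fun y => if p.1 ≠ p.2 then pd (J p.1) (pd (J p.2)
          (fun z => traceTF φ z (removeAt2 p.1 p.2 J))) y else 0)
          = fun _ => (0:ℝ) := by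
        funext y; rw [if_neg hp]
      rw [hfun]
      exact contDiff_const
  have str : ContDiff ℝ (⊤ : ℕ∞) (fun y => ∑ i : Fin (m+3), ∑ j : Fin (m+3),
      (if i ≠ j then pd (J i) (pd (J j)
        (fun z => traceTF φ z (removeAt2 i j J))) y else 0)) := by
    have e : (fun y => ∑ p : Fin (m+3) × Fin (m+3),
        (if p.1 ≠ p.2 then pd (J p.1) (pd (J p.2)
          (fun z => traceTF φ z (removeAt2 p.1 p.2 J))) y else 0))
        = (fun y => ∑ i : Fin (m+3), ∑ j : Fin (m+3),
            (if i ≠ j then pd (J i) (pd (J j)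
              (fun z => traceTF φ z (removeAt2 i j J))) y else 0)) := by
      funext y; rw [Fintype.sum_prod_type]
    rw [← e]
    exact ContDiff.sum fun p _ => strp p
  -- decompose Fronsdal
  have e0 : (fun y => Fronsdal φ y J) = fun y =>
      (fun y => boxTF φ y J - ∑ i : Fin (m+3),
        pd (J i) (fun z => divTF φ z (removeAt i J)) y) y
      + (fun y => (1/2) * ∑ i : Fin (m+3), ∑ j : Fin (m+3),
          (if i ≠ j then pd (J i) (pd (J j)
            (fun z => traceTF φ z (removeAt2 i j J))) y else 0)) y := rfl
  rw [e0]
  rw [congrFun (pdList_add (ContDiff.sub sbox sdv) (contDiff_const.mul str) l) x]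
  congr 1
  · rw [congrFun (pdList_sub sbox sdv l) x]
    congr 1
    rw [congrFun (pdList_sumF Finset.univ
      (fun i : Fin (m+3) => fun y => pd (J i) (fun z => divTF φ z (removeAt i J)) y)
      (fun i _ => sdvi i) l) x]
  · rw [congrFun (pdList_const_mul (1/2) str l) x]
    congr 1
    have e1 : (fun y => ∑ i : Fin (m+3), ∑ j : Fin (m+3),
        (if i ≠ j then pd (J i) (pd (J j)
          (fun z => traceTF φ z (removeAt2 i j J))) y else 0))
        = fun y => ∑ p : Fin (m+3) × Fin (m+3),
            (if p.1 ≠ p.2 then pd (J p.1) (pd (J p.2)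
              (fun z => traceTF φ z (removeAt2 p.1 p.2 J))) y else 0) := by
      funext y; rw [Fintype.sum_prod_type]
    rw [e1]
    rw [congrFun (pdList_sumF Finset.univ _ (fun p _ => strp p) l) x]
    rw [Fintype.sum_prod_type]
    apply Finset.sum_congr rfl; intro i _
    apply Finset.sum_congr rfl; intro j _
    by_cases hij : i ≠ j
    · have hfun : (fun y => if i ≠ j then pd (J i) (pd (J j)
          (fun z => traceTF φ z (removeAt2 i j J))) y else 0)
          = pd (J i) (pd (J j) (fun z => traceTF φ z (removeAt2 i j J))) := by
        funext y; rw [if_pos hij]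
      rw [hfun, if_pos hij]
    · have hfun : (fun y => if i ≠ j then pd (J i) (pd (J j)
          (fun z => traceTF φ z (removeAt2 i j J))) y else 0)
          = fun _ : Pt D => (0:ℝ) := by
        funext y; rw [if_neg hij]
      rw [hfun, if_neg hij, pdList_zero]

lemma div_cancel (hs : SmoothTF φ) (i : Fin (m+3)) (hi : (i : ℕ) < m + 2) (x : Pt D) :
    ∑ ε : Fin (m+2) → Bool, swapSign ε *
      pdList (LLd μ ν ε) (pd (JJd μ ν ε i)
        (fun y => divTF φ y (removeAt i (JJd μ ν ε)))) x = 0 := by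
  have hie : i = Fin.castSucc (⟨(i : ℕ), hi⟩ : Fin (m+2)) := Fin.ext rfl
  rw [hie]
  exact cancel_main μ ν ⟨(i : ℕ), hi⟩
    (fun ε => fun y => divTF φ y (removeAt (Fin.castSucc ⟨(i : ℕ), hi⟩) (JJd μ ν ε)))
    (fun ε => smooth_divTF hs _)
    (fun ε => by
      beta_reduce
      have h2 : removeAt (Fin.castSucc ⟨(i : ℕ), hi⟩)
          (JJd μ ν (Function.update ε ⟨(i : ℕ), hi⟩ (!ε ⟨(i : ℕ), hi⟩)))
          = removeAt (Fin.castSucc ⟨(i : ℕ), hi⟩) (JJd μ ν ε) :=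
        removeAt_congr _ (fun j hj => JJ_flip_ne μ ν ε _ _ j hj)
      rw [h2]) x

lemma trace_cancel (hs : SmoothTF φ) (i j : Fin (m+3)) (hij : i ≠ j) (x : Pt D) :
    ∑ ε : Fin (m+2) → Bool, swapSign ε *
      pdList (LLd μ ν ε) (pd (JJd μ ν ε i) (pd (JJd μ ν ε j)
        (fun y => traceTF φ y (removeAt2 i j (JJd μ ν ε))))) x = 0 := by
  by_cases hi : (i : ℕ) < m + 2
  · have hie : i = Fin.castSucc (⟨(i : ℕ), hi⟩ : Fin (m+2)) := Fin.ext rfl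
    rw [hie]
    refine cancel_main μ ν ⟨(i : ℕ), hi⟩
      (fun ε => pd (JJd μ ν ε j) (fun y => traceTF φ y
        (removeAt2 (Fin.castSucc ⟨(i : ℕ), hi⟩) j (JJd μ ν ε))))
      (fun ε => contDiff_pd (smooth_traceTF hs _) _) (fun ε => ?_) x
    have h1 : JJd μ ν (Function.update ε ⟨(i : ℕ), hi⟩ (!ε ⟨(i : ℕ), hi⟩)) j = JJd μ ν ε j :=
      JJ_flip_ne μ ν ε _ _ j (by rw [← hie]; exact hij.symm)
    have h2 : removeAt2 (Fin.castSucc ⟨(i : ℕ), hi⟩) j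
        (JJd μ ν (Function.update ε ⟨(i : ℕ), hi⟩ (!ε ⟨(i : ℕ), hi⟩)))
        = removeAt2 (Fin.castSucc ⟨(i : ℕ), hi⟩) j (JJd μ ν ε) :=
      removeAt2_congr _ _ (by rw [← hie]; exact hij)
        (fun l hl _ => JJ_flip_ne μ ν ε _ _ l hl)
    beta_reduce
    rw [h1, h2]
  · -- here `j` must satisfy `j < m+2`; commute the two derivatives first
    have hj : (j : ℕ) < m + 2 := by
      have h1 := i.isLt
      have h2 := j.isLt
      rcases Nat.lt_or_ge (j : ℕ) (m+2) with h | h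
      · exact h
      · exfalso; exact hij (Fin.ext (by omega))
    have hcomm : ∀ ε : Fin (m+2) → Bool,
        pd (JJd μ ν ε i) (pd (JJd μ ν ε j)
          (fun y => traceTF φ y (removeAt2 i j (JJd μ ν ε))))
        = pd (JJd μ ν ε j) (pd (JJd μ ν ε i)
          (fun y => traceTF φ y (removeAt2 i j (JJd μ ν ε)))) :=
      fun ε => pd_comm (smooth_traceTF hs _) _ _
    calc ∑ ε : Fin (m+2) → Bool, swapSign ε *
          pdList (LLd μ ν ε) (pd (JJd μ ν ε i) (pd (JJd μ ν ε j)
            (fun y => traceTF φ y (removeAt2 i j (JJd μ ν ε))))) x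
        = ∑ ε : Fin (m+2) → Bool, swapSign ε *
          pdList (LLd μ ν ε) (pd (JJd μ ν ε j) (pd (JJd μ ν ε i)
            (fun y => traceTF φ y (removeAt2 i j (JJd μ ν ε))))) x := by
          apply Finset.sum_congr rfl; intro ε _; rw [hcomm ε]
      _ = 0 := by
          have hje : j = Fin.castSucc (⟨(j : ℕ), hj⟩ : Fin (m+2)) := Fin.ext rfl
          rw [hje]
          refine cancel_main μ ν ⟨(j : ℕ), hj⟩
            (fun ε => pd (JJd μ ν ε i) (fun y => traceTF φ y
              (removeAt2 i (Fin.castSucc ⟨(j : ℕ), hj⟩) (JJd μ ν ε))))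
            (fun ε => contDiff_pd (smooth_traceTF hs _) _) (fun ε => ?_) x
          have h1 : JJd μ ν (Function.update ε ⟨(j : ℕ), hj⟩ (!ε ⟨(j : ℕ), hj⟩)) i
              = JJd μ ν ε i :=
            JJ_flip_ne μ ν ε _ _ i (by rw [← hje]; exact hij)
          have h2 : removeAt2 i (Fin.castSucc ⟨(j : ℕ), hj⟩)
              (JJd μ ν (Function.update ε ⟨(j : ℕ), hj⟩ (!ε ⟨(j : ℕ), hj⟩)))
              = removeAt2 i (Fin.castSucc ⟨(j : ℕ), hj⟩) (JJd μ ν ε) :=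
            removeAt2_congr _ _ (by rw [← hje]; exact hij)
              (fun l _ hl => JJ_flip_ne μ ν ε _ _ l hl)
          beta_reduce
          rw [h1, h2]

lemma swapSign_snoc_false (ε : Fin (m+2) → Bool) :
    swapSign (Fin.snoc ε false : Fin (m+3) → Bool) = swapSign ε := by
  rw [swapSign_snoc]; simp

lemma swapSign_snoc_true (ε : Fin (m+2) → Bool) :
    swapSign (Fin.snoc ε true : Fin (m+3) → Bool) = - swapSign ε := by
  rw [swapSign_snoc]; simp

lemma dirs_snoc_false (b : Fin D) (ε : Fin (m+2) → Bool) :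
    List.ofFn (fun i : Fin (m+3) =>
        if (Fin.snoc ε false : Fin (m+3) → Bool) i then (Ppd μ ν b i).2 else (Ppd μ ν b i).1)
      = LLd μ ν ε ++ [b] := by
  rw [dirs_snoc]; simp

lemma dirs_snoc_true (b : Fin D) (ε : Fin (m+2) → Bool) :
    List.ofFn (fun i : Fin (m+3) =>
        if (Fin.snoc ε true : Fin (m+3) → Bool) i then (Ppd μ ν b i).2 else (Ppd μ ν b i).1)
      = LLd μ ν ε ++ [ν (Fin.last (m+2))] := by
  rw [dirs_snoc]; simp

theorem curvature_divergence_identity' (φ : TF D (m + 3))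
    (hsym : SymTF φ) (hsmooth : SmoothTF φ) :
    ∀ (x : Pt D),
      (∑ a : Fin D, ∑ b : Fin D, mink D a b *
        pd a (fun y => curvK φ y (Ppd μ ν b)) x)
      = ∑ ε : Fin (m + 2) → Bool, swapSign ε *
          pdList (LLd μ ν ε) (fun y => Fronsdal φ y (JJd μ ν ε)) x := by
  intro x
  -- per-(a,b) expansion of the left-hand side
  have hL2 : ∀ a b : Fin D, pd a (fun y => curvK φ y (Ppd μ ν b)) x
      = ∑ ε : Fin (m+2) → Bool,
          (swapSign ε * pdList (LLd μ ν ε) (pd a (pd b (fun z => φ z (JJd μ ν ε)))) x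
           - swapSign ε * pdList (LLd μ ν ε)
               (pd (ν (Fin.last (m+2))) (pd a (fun z => φ z (JBd μ ν b ε)))) x) := by
    intro a b
    rw [pd_curvK φ hsmooth (Ppd μ ν b) a x, sum_snoc_split]
    apply Finset.sum_congr rfl
    intro ε _
    beta_reduce
    have hfalse : swapSign (Fin.snoc ε false : Fin (m+3) → Bool) *
        pd a (pdList (List.ofFn fun i => if (Fin.snoc ε false : Fin (m+3) → Bool) i
            then (Ppd μ ν b i).2 else (Ppd μ ν b i).1)
          (fun z => φ z fun i => if (Fin.snoc ε false : Fin (m+3) → Bool) i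
            then (Ppd μ ν b i).1 else (Ppd μ ν b i).2)) x
        = swapSign ε * pdList (LLd μ ν ε) (pd a (pd b (fun z => φ z (JJd μ ν ε)))) x := by
      rw [swapSign_snoc_false, dirs_snoc_false, fld_snoc_false, pdList_append]
      rw [show pdList [b] (fun z => φ z (JJd μ ν ε)) = pd b (fun z => φ z (JJd μ ν ε)) from rfl]
      rw [pd_pdList (contDiff_pd (hsmooth _) b) a]
    have htrue : swapSign (Fin.snoc ε true : Fin (m+3) → Bool) *
        pd a (pdList (List.ofFn fun i => if (Fin.snoc ε true : Fin (m+3) → Bool) i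
            then (Ppd μ ν b i).2 else (Ppd μ ν b i).1)
          (fun z => φ z fun i => if (Fin.snoc ε true : Fin (m+3) → Bool) i
            then (Ppd μ ν b i).1 else (Ppd μ ν b i).2)) x
        = - (swapSign ε * pdList (LLd μ ν ε)
              (pd (ν (Fin.last (m+2))) (pd a (fun z => φ z (JBd μ ν b ε)))) x) := by
      rw [swapSign_snoc_true, dirs_snoc_true, fld_snoc_true, pdList_append]
      rw [show pdList [ν (Fin.last (m+2))] (fun z => φ z (JBd μ ν b ε))
          = pd (ν (Fin.last (m+2))) (fun z => φ z (JBd μ ν b ε)) from rfl]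
      rw [pd_pdList (contDiff_pd (hsmooth _) (ν (Fin.last (m+2)))) a]
      rw [show pd a (pd (ν (Fin.last (m+2))) (fun z => φ z (JBd μ ν b ε)))
          = pd (ν (Fin.last (m+2))) (pd a (fun z => φ z (JBd μ ν b ε))) from
        pd_comm (hsmooth _) a (ν (Fin.last (m+2)))]
      ring
    rw [hfalse, htrue]
    ring
  -- global rearrangement of the left-hand side
  have hL3 : (∑ a : Fin D, ∑ b : Fin D, mink D a b *
        pd a (fun y => curvK φ y (Ppd μ ν b)) x)
      = ∑ ε : Fin (m+2) → Bool, swapSign ε *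
          ((∑ a : Fin D, ∑ b : Fin D, mink D a b *
              pdList (LLd μ ν ε) (pd a (pd b (fun z => φ z (JJd μ ν ε)))) x)
           - ∑ a : Fin D, ∑ b : Fin D, mink D a b *
              pdList (LLd μ ν ε) (pd (ν (Fin.last (m+2)))
                (pd a (fun z => φ z (JBd μ ν b ε)))) x) := by
    have step1 : (∑ a : Fin D, ∑ b : Fin D, mink D a b *
          pd a (fun y => curvK φ y (Ppd μ ν b)) x)
        = ∑ a : Fin D, ∑ b : Fin D, ∑ ε : Fin (m+2) → Bool,
            (mink D a b * (swapSign ε *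
                pdList (LLd μ ν ε) (pd a (pd b (fun z => φ z (JJd μ ν ε)))) x)
             - mink D a b * (swapSign ε *
                pdList (LLd μ ν ε) (pd (ν (Fin.last (m+2)))
                  (pd a (fun z => φ z (JBd μ ν b ε)))) x)) := by
      apply Finset.sum_congr rfl; intro a _
      apply Finset.sum_congr rfl; intro b _
      rw [hL2 a b, Finset.mul_sum]
      apply Finset.sum_congr rfl; intro ε _
      ring
    rw [step1]
    rw [show (∑ a : Fin D, ∑ b : Fin D, ∑ ε : Fin (m+2) → Bool,
            (mink D a b * (swapSign ε *
                pdList (LLd μ ν ε) (pd a (pd b (fun z => φ z (JJd μ ν ε)))) x)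
             - mink D a b * (swapSign ε *
                pdList (LLd μ ν ε) (pd (ν (Fin.last (m+2)))
                  (pd a (fun z => φ z (JBd μ ν b ε)))) x)))
        = ∑ ε : Fin (m+2) → Bool, ∑ a : Fin D, ∑ b : Fin D,
            (mink D a b * (swapSign ε *
                pdList (LLd μ ν ε) (pd a (pd b (fun z => φ z (JJd μ ν ε)))) x)
             - mink D a b * (swapSign ε *
                pdList (LLd μ ν ε) (pd (ν (Fin.last (m+2)))
                  (pd a (fun z => φ z (JBd μ ν b ε)))) x)) from by
      rw [Finset.sum_congr rfl (fun a (_ : a ∈ Finset.univ) => (Finset.sum_comm :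
        (∑ b : Fin D, ∑ ε : Fin (m+2) → Bool,
            (mink D a b * (swapSign ε *
                pdList (LLd μ ν ε) (pd a (pd b (fun z => φ z (JJd μ ν ε)))) x)
             - mink D a b * (swapSign ε *
                pdList (LLd μ ν ε) (pd (ν (Fin.last (m+2)))
                  (pd a (fun z => φ z (JBd μ ν b ε)))) x)))
          = ∑ ε : Fin (m+2) → Bool, ∑ b : Fin D, _))]
      exact Finset.sum_comm]
    apply Finset.sum_congr rfl; intro ε _
    rw [mul_sub, Finset.mul_sum, Finset.mul_sum, ← Finset.sum_sub_distrib]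
    apply Finset.sum_congr rfl; intro a _
    rw [Finset.mul_sum, Finset.mul_sum, ← Finset.sum_sub_distrib]
    apply Finset.sum_congr rfl; intro b _
    ring
  rw [hL3]
  -- assemble box and divergence on the left
  have hL4 : ∀ ε : Fin (m+2) → Bool, swapSign ε *
        ((∑ a : Fin D, ∑ b : Fin D, mink D a b *
            pdList (LLd μ ν ε) (pd a (pd b (fun z => φ z (JJd μ ν ε)))) x)
         - ∑ a : Fin D, ∑ b : Fin D, mink D a b *
            pdList (LLd μ ν ε) (pd (ν (Fin.last (m+2)))
              (pd a (fun z => φ z (JBd μ ν b ε)))) x)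
      = swapSign ε *
          (pdList (LLd μ ν ε) (fun y => boxTF φ y (JJd μ ν ε)) x
           - pdList (LLd μ ν ε) (pd (ν (Fin.last (m+2)))
               (fun y => divTF φ y (removeAt (Fin.last (m+2)) (JJd μ ν ε)))) x) := by
    intro ε
    rw [box_assemble φ hsmooth (JJd μ ν ε) (LLd μ ν ε) x,
        div_assemble μ ν φ hsym hsmooth ε (LLd μ ν ε) (ν (Fin.last (m+2))) x]
  rw [Finset.sum_congr rfl (fun ε _ => hL4 ε)]
  -- now the right-hand side
  have hR1 : ∀ ε : Fin (m+2) → Bool,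
      swapSign ε * pdList (LLd μ ν ε) (fun y => Fronsdal φ y (JJd μ ν ε)) x
      = (swapSign ε * pdList (LLd μ ν ε) (fun y => boxTF φ y (JJd μ ν ε)) x
         - ∑ i : Fin (m+3), swapSign ε * pdList (LLd μ ν ε)
             (pd (JJd μ ν ε i) (fun y => divTF φ y (removeAt i (JJd μ ν ε)))) x)
        + (1/2) * ∑ i : Fin (m+3), ∑ j : Fin (m+3),
            (if i ≠ j then swapSign ε * pdList (LLd μ ν ε)
              (pd (JJd μ ν ε i) (pd (JJd μ ν ε j)
                (fun y => traceTF φ y (removeAt2 i j (JJd μ ν ε))))) x else 0) := by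
    intro ε
    rw [pdList_Fronsdal φ hsmooth (LLd μ ν ε) (JJd μ ν ε) x]
    rw [show ∀ (A B C : ℝ), swapSign ε * (A - B + (1/2) * C)
        = (swapSign ε * A - swapSign ε * B) + (1/2) * (swapSign ε * C) from
      fun A B C => by ring]
    congr 1
    · congr 1
      rw [Finset.mul_sum]
    · congr 1
      rw [Finset.mul_sum]
      apply Finset.sum_congr rfl; intro i _
      rw [Finset.mul_sum]
      apply Finset.sum_congr rfl; intro j _
      by_cases hij : i ≠ j
      · rw [if_pos hij, if_pos hij]
      · rw [if_neg hij, if_neg hij, mul_zero]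
  rw [Finset.sum_congr rfl (fun ε _ => hR1 ε), Finset.sum_add_distrib,
      Finset.sum_sub_distrib]
  -- the divergence sum : only the last index survives
  have hDiv : (∑ ε : Fin (m+2) → Bool, ∑ i : Fin (m+3),
        swapSign ε * pdList (LLd μ ν ε)
          (pd (JJd μ ν ε i) (fun y => divTF φ y (removeAt i (JJd μ ν ε)))) x)
      = ∑ ε : Fin (m+2) → Bool, swapSign ε * pdList (LLd μ ν ε)
          (pd (ν (Fin.last (m+2)))
            (fun y => divTF φ y (removeAt (Fin.last (m+2)) (JJd μ ν ε)))) x := by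
    rw [Finset.sum_comm]
    rw [Fin.sum_univ_castSucc (n := m+2)]
    have hzero : ∀ i₀ : Fin (m+2), (∑ ε : Fin (m+2) → Bool,
        swapSign ε * pdList (LLd μ ν ε)
          (pd (JJd μ ν ε (Fin.castSucc i₀))
            (fun y => divTF φ y (removeAt (Fin.castSucc i₀) (JJd μ ν ε)))) x) = 0 :=
      fun i₀ => div_cancel μ ν φ hsmooth (Fin.castSucc i₀) (by simp) x
    rw [Finset.sum_congr rfl (fun i₀ _ => hzero i₀), Finset.sum_const, smul_zero, zero_add]
    apply Finset.sum_congr rfl; intro ε _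
    rw [JJ_last]
  -- the trace sum vanishes entirely
  have hTr : (∑ ε : Fin (m+2) → Bool, (1/2) * ∑ i : Fin (m+3), ∑ j : Fin (m+3),
        (if i ≠ j then swapSign ε * pdList (LLd μ ν ε)
          (pd (JJd μ ν ε i) (pd (JJd μ ν ε j)
            (fun y => traceTF φ y (removeAt2 i j (JJd μ ν ε))))) x else 0)) = 0 := by
    rw [← Finset.mul_sum, Finset.sum_comm]
    have hz1 : ∀ i : Fin (m+3), (∑ ε : Fin (m+2) → Bool, ∑ j : Fin (m+3),
        (if i ≠ j then swapSign ε * pdList (LLd μ ν ε)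
          (pd (JJd μ ν ε i) (pd (JJd μ ν ε j)
            (fun y => traceTF φ y (removeAt2 i j (JJd μ ν ε))))) x else 0)) = 0 := by
      intro i
      rw [Finset.sum_comm]
      apply Finset.sum_eq_zero
      intro j _
      by_cases hij : i ≠ j
      · rw [Finset.sum_congr rfl (fun ε _ => if_pos hij)]
        exact trace_cancel μ ν φ hsmooth i j hij x
      · rw [Finset.sum_congr rfl (fun ε _ => if_neg hij), Finset.sum_const, smul_zero]
    rw [Finset.sum_congr rfl (fun i _ => hz1 i), Finset.sum_const, smul_zero, mul_zero]
  rw [hDiv, hTr, add_zero, ← Finset.sum_sub_distrib]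
  apply Finset.sum_congr rfl; intro ε _
  rw [mul_sub]

end AuxiliaryLemmas

/-- divergence identity for the spin-`s` curvature,
`s = m+3`. -/
theorem curvature_divergence_identity (D m : ℕ) (φ : TF D (m + 3))
    (hsym : SymTF φ) (hsmooth : SmoothTF φ) :
    ∀ (x : Pt D) (μ : Fin (m + 2) → Fin D) (ν : Fin (m + 3) → Fin D),
      (∑ a : Fin D, ∑ b : Fin D, mink D a b *
        pd a (fun y => curvK φ y (fun i : Fin (m + 3) =>
          if h : (i : ℕ) < m + 2 then (μ ⟨(i : ℕ), h⟩, ν i)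
          else (b, ν i))) x)
      = ∑ ε : Fin (m + 2) → Bool, swapSign ε *
          pdList (List.ofFn (fun i : Fin (m + 2) =>
              if ε i then ν ⟨(i : ℕ), by have := i.isLt; omega⟩ else μ i))
            (fun y => Fronsdal φ y (fun j : Fin (m + 3) =>
              if h : (j : ℕ) < m + 2 then
                (if ε ⟨(j : ℕ), h⟩ then μ ⟨(j : ℕ), h⟩ else ν j)
              else ν j)) x := by
  intro x μ ν
  exact curvature_divergence_identity' μ ν φ hsym hsmooth x
end
end

section
/- Let I be a finite index set, let f : I×I×I → ℝ be totally symmetric and diagonal (f_{abc} = 0 unless a = b = c), and let l : I×I → ℝ be antisymmetric (l_{ab} = −l_{ba}). If the symmetrized constraint Σ_e f_{e(bc} l_{a)e} = 0 holds for all a, b, c ∈ I (round brackets denoting symmetrization over a, b, c), then f_{bbb} l_{ab} = 0 for all a, b ∈ I; in particular, if f_{bbb} ≠ 0 for every b, then l = 0. Consequently, massless spin-2 fields entering the antisymmetric nonabelian 1-2-2 coupling (with structure constants l_{[ab]}) cannot simultaneously carry nontrivial Einstein–Hilbert self-interactions (with diagonal structure constants f_{(abc)}). -/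
/-!
Because `f` is diagonal, in the constraint at `(a, b, b)` the term `∑_e f_{ebb} l_{ae}` collapses
to `f_{bbb} l_{ab}`, while the two terms `∑_e f_{eba} l_{be}` and `∑_e f_{eab} l_{be}` survive only
for `e = a = b`, where they are multiples of `l_{bb} = 0`.
-/

section DiagonalStructureConstants

variable {I R : Type*} [Fintype I] [NonUnitalNonAssocSemiring R] {f : I → I → I → R}

theorem sum_diag_mul_eq_ite [DecidableEq I]
    (hf_diag : ∀ a b c : I, (a ≠ b ∨ b ≠ c ∨ a ≠ c) → f a b c = 0) (b c : I) (g : I → R) :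
    ∑ e : I, f e b c * g e = if b = c then f b b b * g b else 0 := by
  rw [Finset.sum_eq_single b (fun e _ he => by rw [hf_diag e b c (.inl he), zero_mul])
    (fun hb => absurd (Finset.mem_univ b) hb)]
  split_ifs with hbc
  · rw [hbc]
  · rw [hf_diag b b c (.inr (.inl hbc)), zero_mul]

theorem diag_mul_eq_zero_of_symmetrized_sum_eq_zero {l : I → I → R}
    (hf_diag : ∀ a b c : I, (a ≠ b ∨ b ≠ c ∨ a ≠ c) → f a b c = 0)
    (hl_diag : ∀ a : I, l a a = 0) {a b : I}
    (h : ∑ e : I, (f e b b * l a e + f e b a * l b e + f e a b * l b e) = 0) :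
    f b b b * l a b = 0 := by
  classical
  by_cases hab : a = b
  · rw [hab, hl_diag, mul_zero]
  · simpa [Finset.sum_add_distrib, sum_diag_mul_eq_ite hf_diag, hab, Ne.symm hab] using h

end DiagonalStructureConstants

theorem no_coexistence_122_with_einstein_hilbert_general
    {I : Type*} [Fintype I]
    (f : I → I → I → ℝ) (l : I → I → ℝ)
    (hf_diag : ∀ a b c : I, (a ≠ b ∨ b ≠ c ∨ a ≠ c) → f a b c = 0)
    (hl_antisym : ∀ a b : I, l a b = - l b a)
    (hconstraint : ∀ a b c : I,
      ∑ e : I, (f e b c * l a e + f e c a * l b e + f e a b * l c e) = 0) :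
    (∀ a b : I, f b b b * l a b = 0) ∧
    ((∀ b : I, f b b b ≠ 0) → l = 0) := by
  have hl_diag : ∀ a : I, l a a = 0 := fun a => by linarith [hl_antisym a a]
  have hfl : ∀ a b : I, f b b b * l a b = 0 := fun a b =>
    diag_mul_eq_zero_of_symmetrized_sum_eq_zero hf_diag hl_diag (hconstraint a b b)
  refine ⟨hfl, fun hf_ne => ?_⟩
  funext a b
  exact (mul_eq_zero.mp (hfl a b)).resolve_left (hf_ne b)

theorem no_coexistence_122_with_einstein_hilbert
    {I : Type*} [Fintype I]
    (f : I → I → I → ℝ) (l : I → I → ℝ)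
    (hf_sym : ∀ (a b c : I) (σ : Equiv.Perm (Fin 3)),
      f a b c = f (![a, b, c] (σ 0)) (![a, b, c] (σ 1)) (![a, b, c] (σ 2)))
    (hf_diag : ∀ a b c : I, (a ≠ b ∨ b ≠ c ∨ a ≠ c) → f a b c = 0)
    (hl_antisym : ∀ a b : I, l a b = - l b a)
    (hconstraint : ∀ a b c : I,
      ∑ e : I, (f e b c * l a e + f e c a * l b e + f e a b * l c e) = 0) :
    (∀ a b : I, f b b b * l a b = 0) ∧
    ((∀ b : I, f b b b ≠ 0) → l = 0) :=
  no_coexistence_122_with_einstein_hilbert_general f l hf_diag hl_antisym hconstraint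
end
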